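/- For every six points v₀, …, v₅ of the Euclidean plane in general position (pairwise distinct, no three collinear), the closed polygon with segments sᵢ = [vᵢ, v_{(i+1) mod 6}] does not attain all 9 = 6·(6−3)/2 possible crossings: there exists a pair of non-adjacent segments (indices with j ≢ i, i±1 (mod 6)) whose intersection is empty. -/

import Mathlib

/-!
Side `[v₁, v₂]` has to cross the three sides `[v₃, v₄]`, `[v₄, v₅]`, `[v₅, v₀]`. Each crossing puts
the two endpoints of the crossing side strictly on opposite sides of the line `v₁v₂`, so after
three alternations `v₃` and `v₀` lie on opposite sides of it. But `[v₀, v₁]` also has to cross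
`[v₂, v₃]`, which makes `v₀ v₂ v₁ v₃` a convex quadrilateral with edge `v₁v₂`, so `v₀` and `v₃`
lie on the same side of that line.
-/

local notation "ℝ²" => EuclideanSpace ℝ (Fin 2)

/-- Twice the signed area of the triangle `pqr`; its sign is the orientation of `(p, q, r)`. -/
def orient (p q r : ℝ²) : ℝ :=
  (q 0 - p 0) * (r 1 - p 1) - (q 1 - p 1) * (r 0 - p 0)

lemma orient_rotate (p q r : ℝ²) : orient q r p = orient p q r := by
  unfold orient; ring

lemma orient_cocycle (a b c d : ℝ²) :
    orient b c d - orient a c d + orient a b d - orient a b c = 0 := by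
  unfold orient; ring

lemma collinear_of_orient_eq_zero {p q r : ℝ²} (h : orient p q r = 0) :
    Collinear ℝ ({p, q, r} : Set ℝ²) := by
  rcases eq_or_ne p q with rfl | hpq
  · simpa using collinear_pair ℝ p r
  have hrot : ({p, q, r} : Set ℝ²) = {r, p, q} := by
    ext; simp only [Set.mem_insert_iff, Set.mem_singleton_iff]; tauto
  rw [hrot]
  apply collinear_insert_of_mem_affineSpan_pair
  have hN : 0 < (q 0 - p 0) ^ 2 + (q 1 - p 1) ^ 2 := by
    by_contra! hle
    apply hpq
    ext i
    fin_cases i <;> simp <;> nlinarith [sq_nonneg (q 0 - p 0), sq_nonneg (q 1 - p 1)]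
  -- the parameter of the orthogonal projection of `r` onto the line `pq`
  set t := ((r 0 - p 0) * (q 0 - p 0) + (r 1 - p 1) * (q 1 - p 1)) /
    ((q 0 - p 0) ^ 2 + (q 1 - p 1) ^ 2)
  convert AffineMap.lineMap_mem_affineSpan_pair t p q
  unfold orient at h
  ext i
  fin_cases i <;> simp [AffineMap.lineMap_apply, t] <;> field_simp
  · linear_combination -(q 1 - p 1) * h
  · linear_combination (q 0 - p 0) * h

lemma orient_mul_neg_of_segment_inter {a b c d : ℝ²}
    (hc : orient a b c ≠ 0) (hd : orient a b d ≠ 0)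
    (hx : (segment ℝ a b ∩ segment ℝ c d).Nonempty) :
    orient a b c * orient a b d < 0 := by
  obtain ⟨x, ⟨u, w, -, -, huw, rfl⟩, ⟨s, t, hs, ht, hst, hx⟩⟩ := hx
  have e0 := congrArg (· 0) hx
  have e1 := congrArg (· 1) hx
  simp only [PiLp.add_apply, PiLp.smul_apply, smul_eq_mul] at e0 e1
  have key : s * orient a b c + t * orient a b d = 0 := by
    unfold orient
    linear_combination (b 0 - a 0) * e1 - (b 1 - a 1) * e0
      + (a 0 * b 1 - b 0 * a 1) * (hst - huw)
  have ht0 : 0 < t := ht.lt_of_ne' fun h0 => hc (by simpa [h0, show s = 1 by linarith] using key)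
  have hscaled : s * (orient a b c * orient a b d) = -(t * orient a b d ^ 2) := by
    linear_combination orient a b d * key
  refine neg_of_mul_neg_right ?_ hs
  rw [hscaled, neg_lt_zero]
  positivity

lemma orient_mul_pos_of_segment_inter {a b c d : ℝ²}
    (habc : orient a b c ≠ 0) (habd : orient a b d ≠ 0)
    (hacd : orient a c d ≠ 0) (hbcd : orient b c d ≠ 0)
    (hx : (segment ℝ a b ∩ segment ℝ c d).Nonempty) :
    0 < orient b c a * orient b c d := by
  have hab := orient_mul_neg_of_segment_inter habc habd hx
  have hcd := orient_mul_neg_of_segment_inter (a := c) (b := d) (c := a) (d := b)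
    (by rwa [orient_rotate]) (by rwa [orient_rotate]) (by rwa [Set.inter_comm])
  rw [orient_rotate a c d, orient_rotate b c d] at hcd
  rw [orient_rotate a b c]
  -- both factors have the sign of `orient a b c - orient a b d`, by the cocycle identity
  have hA : 0 < orient a b c * (orient a b c - orient a b d) := by
    nlinarith [sq_pos_of_ne_zero habc]
  have hD : 0 < orient b c d * (orient b c d - orient a c d) := by
    nlinarith [sq_pos_of_ne_zero hbcd]
  have hdiff : orient b c d - orient a c d = orient a b c - orient a b d := by
    linear_combination orient_cocycle a b c d
  rw [hdiff] at hD
  exact pos_of_mul_pos_left (by nlinarith [mul_pos hA hD]) (sq_nonneg (orient a b c - orient a b d))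

theorem hexagon_not_all_crossings_general
    (v : Fin 6 → EuclideanSpace ℝ (Fin 2))
    (hcol : ∀ i j k : Fin 6, i ≠ j → j ≠ k → i ≠ k →
      ¬ Collinear ℝ ({v i, v j, v k} : Set (EuclideanSpace ℝ (Fin 2)))) :
    ∃ i j : Fin 6, j ≠ i ∧ j ≠ i + 1 ∧ i ≠ j + 1 ∧
      segment ℝ (v i) (v (i + 1)) ∩ segment ℝ (v j) (v (j + 1)) = ∅ := by
  by_contra! hcross
  have hmeet (i j : Fin 6) (h₁ : j ≠ i := by decide) (h₂ : j ≠ i + 1 := by decide)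
      (h₃ : i ≠ j + 1 := by decide) :
      (segment ℝ (v i) (v (i + 1)) ∩ segment ℝ (v j) (v (j + 1))).Nonempty :=
    hcross i j h₁ h₂ h₃
  have ho (i j k : Fin 6) (hij : i ≠ j := by decide) (hjk : j ≠ k := by decide)
      (hik : i ≠ k := by decide) : orient (v i) (v j) (v k) ≠ 0 :=
    fun h => hcol i j k hij hjk hik (collinear_of_orient_eq_zero h)
  have h34 := orient_mul_neg_of_segment_inter (ho 1 2 3) (ho 1 2 4) (hmeet 1 3)
  have h45 := orient_mul_neg_of_segment_inter (ho 1 2 4) (ho 1 2 5) (hmeet 1 4)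
  have h50 := orient_mul_neg_of_segment_inter (ho 1 2 5) (ho 1 2 0) (hmeet 1 5)
  have h03 := orient_mul_pos_of_segment_inter (ho 0 1 2) (ho 0 1 3) (ho 0 2 3) (ho 1 2 3)
    (hmeet 0 2)
  nlinarith [mul_pos_of_neg_of_neg h34 h50, mul_neg_of_neg_of_pos h45 h03]

/-- No closed hexagon on six points in general position in the plane attains all
`6·(6−3)/2 = 9` possible crossings: some pair of non-adjacent sides is disjoint. -/
theorem hexagon_not_all_crossings
    (v : Fin 6 → EuclideanSpace ℝ (Fin 2))
    (hdist : ∀ i j : Fin 6, i ≠ j → v i ≠ v j)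
    (hcol : ∀ i j k : Fin 6, i ≠ j → j ≠ k → i ≠ k →
      ¬ Collinear ℝ ({v i, v j, v k} : Set (EuclideanSpace ℝ (Fin 2)))) :
    ∃ i j : Fin 6, j ≠ i ∧ j ≠ i + 1 ∧ i ≠ j + 1 ∧
      segment ℝ (v i) (v (i + 1)) ∩ segment ℝ (v j) (v (j + 1)) = ∅ :=
  hexagon_not_all_crossings_general v hcol
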